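/- Let a, b be real numbers with a² ≠ b² and let n be a natural number. Then C_{a,b}(n) is invertible, and its inverse is C_{a/(a²−b²), −b/(a²−b²)}(n). -/
import Mathlib


/-- `Cmat a b n` is the `2^n × 2^n` real matrix indexed by bit strings `x, y ∈ {0,1}^n`
whose `(x, y)` entry is `a ^ (n - d) * b ^ d`, where `d` is the Hamming distance
between `x` and `y`. -/
def Cmat (a b : ℝ) (n : ℕ) : Matrix (Fin n → Fin 2) (Fin n → Fin 2) ℝ :=
  Matrix.of fun x y => a ^ (n - hammingDist x y) * b ^ hammingDist x y

/-- `CmatB a n` abbreviates `Cmat a (1 - a) n`. -/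
def CmatB (a : ℝ) (n : ℕ) : Matrix (Fin n → Fin 2) (Fin n → Fin 2) ℝ :=
  Cmat a (1 - a) n

lemma Cmat_apply_prod (a b : ℝ) (n : ℕ) (x y : Fin n → Fin 2) :
    Cmat a b n x y = ∏ i, if x i = y i then a else b := by
  have h2 : (Finset.univ.filter fun i => x i = y i).card + hammingDist x y = n := by
    rw [hammingDist]
    rw [Finset.card_filter_add_card_filter_not (p := fun i => x i = y i)]
    simp
  have hd : hammingDist x y = (Finset.univ.filter fun i => ¬ x i = y i).card := by
    rw [hammingDist]
  rw [Cmat, Finset.prod_ite, Finset.prod_const, Finset.prod_const]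
  rw [Matrix.of_apply, ← hd]
  congr 1
  have h3 : (Finset.univ.filter fun i => x i = y i).card = n - hammingDist x y := by omega
  rw [h3]

lemma sum2 (a b c d : ℝ) (u v : Fin 2) :
    (∑ t : Fin 2, (if u = t then a else b) * (if t = v then c else d))
      = if u = v then a * c + b * d else a * d + b * c := by
  rw [Fin.sum_univ_two]
  fin_cases u <;> fin_cases v <;> simp <;> ring

lemma Cmat_mul (a b c d : ℝ) (n : ℕ)
    (h1 : a * c + b * d = 1) (h0 : a * d + b * c = 0) :
    Cmat a b n * Cmat c d n = 1 := by
  ext x y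
  rw [Matrix.mul_apply]
  simp only [Cmat_apply_prod]
  calc (∑ z : Fin n → Fin 2, (∏ i, if x i = z i then a else b) *
          ∏ i, if z i = y i then c else d)
      = ∑ z : Fin n → Fin 2, ∏ i, ((if x i = z i then a else b) *
          (if z i = y i then c else d)) :=
        Finset.sum_congr rfl fun z _ => (Finset.prod_mul_distrib).symm
    _ = ∏ i, ∑ t : Fin 2, ((if x i = t then a else b) * (if t = y i then c else d)) := by
        rw [Finset.prod_univ_sum]
        exact (Finset.sum_congr (by simp [Fintype.piFinset_univ]) fun _ _ => rfl)
    _ = ∏ i, if x i = y i then (1 : ℝ) else 0 := by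
        refine Finset.prod_congr rfl fun i _ => ?_
        rw [sum2, h1, h0]
    _ = (1 : Matrix (Fin n → Fin 2) (Fin n → Fin 2) ℝ) x y := by
        rw [Finset.prod_boole, Matrix.one_apply]
        simp [funext_iff]

theorem Cmat_inverse (a b : ℝ) (hab : a ^ 2 ≠ b ^ 2) (n : ℕ) :
    IsUnit (Cmat a b n) ∧
      Cmat a b n * Cmat (a / (a ^ 2 - b ^ 2)) (-b / (a ^ 2 - b ^ 2)) n = 1 ∧
      Cmat (a / (a ^ 2 - b ^ 2)) (-b / (a ^ 2 - b ^ 2)) n * Cmat a b n = 1 := by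
  have hD : a ^ 2 - b ^ 2 ≠ 0 := sub_ne_zero.mpr hab
  have h1 : a * (a / (a ^ 2 - b ^ 2)) + b * (-b / (a ^ 2 - b ^ 2)) = 1 := by
    field_simp; ring
  have h0 : a * (-b / (a ^ 2 - b ^ 2)) + b * (a / (a ^ 2 - b ^ 2)) = 0 := by
    field_simp; ring
  have hA := Cmat_mul a b (a / (a ^ 2 - b ^ 2)) (-b / (a ^ 2 - b ^ 2)) n h1 h0
  have hB := Cmat_mul (a / (a ^ 2 - b ^ 2)) (-b / (a ^ 2 - b ^ 2)) a b n
    (by field_simp; ring) (by field_simp; ring)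
  exact ⟨⟨⟨_, _, hA, hB⟩, rfl⟩, hA, hB⟩
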